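/- Let M > 0 be a real number and S = {λ ∈ ℂ : |Re λ| ≤ M and |Im λ| ≤ M}. Let θ : C(S, ℂ) → ℂ be a generalized distribution, i.e. θ is additive, conjugate-homogeneous (θ(c • f) = conj(c) · θ(f) for all c ∈ ℂ), and there is K ≥ 0 with |θ(f)| ≤ K · ‖f‖ for all f, where ‖·‖ is the sup norm. For r ∈ ℝ and ε > 0, an I_r^ε-function is an f ∈ C(S, ℂ) with ‖f‖ ≤ 1 such that f(x) = 0 for every x ∈ S with |Re x − r| ≥ ε; a J_r^ε-function is defined with Im x in place of Re x. Say the line I_r is good for θ if for every δ > 0 there is ε > 0 such that |θ(f)| < δ for every I_r^ε-function f; similarly for J_r. Then the set {r ∈ [−M, M] : I_r is not good for θ} is countable, and likewise the set {r ∈ [−M, M] : J_r is not good for θ} is countable. -/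

import Mathlib

/-!
For `η > 0` call a point heavy if arbitrarily thin strips around it carry test functions `f`
with `‖f‖ ≤ 1` and `‖θ f‖ ≥ η`. Finitely many heavy points have pairwise disjoint neighbourhoods,
so their test functions can be chosen with disjoint supports; rotating each by the phase of
`θ f` and summing gives a function of sup norm at most `1` on which `θ` takes the value
`∑ ‖θ f‖`. Hence there are at most `‖θ‖ / η` heavy points, and a point that is not good is
heavy for some `η = 1 / (n + 1)`, so the bad points form a countable union of finite sets.
-/

/-- The closed square `S = {λ : |Re λ| ≤ M, |Im λ| ≤ M}`. -/
def Sq (M : ℝ) : Set ℂ := {z : ℂ | |z.re| ≤ M ∧ |z.im| ≤ M}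

theorem isCompact_Sq (M : ℝ) : IsCompact (Sq M) := by
  apply Metric.isCompact_of_isClosed_isBounded
  · exact (isClosed_le (Complex.continuous_re.abs) continuous_const).inter
      (isClosed_le (Complex.continuous_im.abs) continuous_const)
  · apply (Metric.isBounded_closedBall (x := (0 : ℂ)) (r := M + M)).subset
    intro z hz
    simp only [Metric.mem_closedBall, dist_zero_right]
    calc ‖z‖ ≤ |z.re| + |z.im| := Complex.norm_le_abs_re_add_abs_im z
      _ ≤ M + M := add_le_add hz.1 hz.2

instance (M : ℝ) : CompactSpace (Sq M) := isCompact_iff_compactSpace.mp (isCompact_Sq M)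

/-- The line `I_r` (resp. `J_r`) is good for `θ`: for every `δ > 0` there is `ε > 0`
such that `|θ(f)| < δ` for every `f` of sup-norm at most `1` vanishing at every point
whose real (resp. imaginary) part is at distance at least `ε` from `r`. -/
def GoodLine (M : ℝ) (θ : C(Sq M, ℂ) → ℂ) (re : Bool) (r : ℝ) : Prop :=
  ∀ δ > (0 : ℝ), ∃ ε > (0 : ℝ), ∀ f : C(Sq M, ℂ), ‖f‖ ≤ 1 →
    (∀ x : Sq M, ε ≤ |(if re then (x : ℂ).re else (x : ℂ).im) - r| → f x = 0) →
    ‖θ f‖ < δ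

open Function

namespace ContinuousMap

variable {X E ι : Type*} [TopologicalSpace X] [CompactSpace X] [NormedAddCommGroup E]

theorem norm_sum_le_of_pairwiseDisjoint_support {T : Finset ι} {f : ι → C(X, E)} {C : ℝ}
    (hC : 0 ≤ C) (hf : ∀ i ∈ T, ‖f i‖ ≤ C)
    (hd : (T : Set ι).PairwiseDisjoint fun i ↦ support (f i)) :
    ‖∑ i ∈ T, f i‖ ≤ C := by
  refine (norm_le _ hC).2 fun x ↦ ?_
  rw [sum_apply]
  by_cases hx : ∃ i ∈ T, f i x ≠ 0
  · obtain ⟨i, hi, hfi⟩ := hx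
    have hsingle : ∑ j ∈ T, f j x = f i x := by
      refine Finset.sum_eq_single_of_mem i hi fun j hj hji ↦ ?_
      by_contra hfj
      exact Set.disjoint_left.1 (hd hj hi hji) (mem_support.2 hfj) (mem_support.2 hfi)
    rw [hsingle]
    exact ((f i).norm_coe_le_norm x).trans (hf i hi)
  · push Not at hx
    rw [Finset.sum_eq_zero hx, norm_zero]
    exact hC

end ContinuousMap

section ConjugateLinear

variable {𝕜 E F ι : Type*} [RCLike 𝕜]

theorem apply_sum_smul_eq_sum_norm [AddCommMonoid E] [Module 𝕜 E] [FunLike F E 𝕜]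
    [SemilinearMapClass F (starRingEnd 𝕜) E 𝕜] (θ : F) (T : Finset ι) (f : ι → E) :
    θ (∑ i ∈ T, (θ (f i) / ‖θ (f i)‖ : 𝕜) • f i) = ∑ i ∈ T, (‖θ (f i)‖ : 𝕜) := by
  simp only [map_sum, map_smulₛₗ, smul_eq_mul, map_div₀, RCLike.conj_ofReal]
  refine Finset.sum_congr rfl fun i _ ↦ ?_
  rw [div_mul_eq_mul_div, RCLike.conj_mul, sq, mul_div_assoc]
  rcases eq_or_ne (‖θ (f i)‖ : 𝕜) 0 with h | h
  · rw [h, zero_mul]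
  · rw [div_self h, mul_one]

variable {X : Type*} [TopologicalSpace X] [CompactSpace X]

theorem sum_norm_le_opNorm_of_pairwiseDisjoint_support (θ : C(X, 𝕜) →L⋆[𝕜] 𝕜)
    {T : Finset ι} {f : ι → C(X, 𝕜)} (hf : ∀ i ∈ T, ‖f i‖ ≤ 1)
    (hd : (T : Set ι).PairwiseDisjoint fun i ↦ support (f i)) :
    ∑ i ∈ T, ‖θ (f i)‖ ≤ ‖θ‖ := by
  set g : C(X, 𝕜) := ∑ i ∈ T, (θ (f i) / ‖θ (f i)‖ : 𝕜) • f i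
  have hg : ‖g‖ ≤ 1 := by
    refine ContinuousMap.norm_sum_le_of_pairwiseDisjoint_support zero_le_one (fun i hi ↦ ?_)
      (hd.mono fun i ↦ support_const_smul_subset _ _)
    calc ‖(θ (f i) / ‖θ (f i)‖ : 𝕜) • f i‖ ≤ 1 * 1 := by
          rw [norm_smul, norm_div, RCLike.norm_ofReal, abs_norm]
          exact mul_le_mul (div_self_le_one _) (hf i hi) (norm_nonneg _) zero_le_one
      _ = 1 := one_mul 1
  calc ∑ i ∈ T, ‖θ (f i)‖ = ‖θ g‖ := by
        rw [apply_sum_smul_eq_sum_norm, ← RCLike.ofReal_sum, RCLike.norm_ofReal,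
          abs_of_nonneg (Finset.sum_nonneg fun i _ ↦ norm_nonneg _)]
    _ ≤ ‖θ‖ * ‖g‖ := θ.le_opNorm g
    _ ≤ ‖θ‖ := mul_le_of_le_one_right (norm_nonneg θ) hg

end ConjugateLinear

section GoodPoints

variable {X 𝕜 α : Type*} [TopologicalSpace X] [CompactSpace X] [RCLike 𝕜] [MetricSpace α]

def IsGoodAt (θ : C(X, 𝕜) → 𝕜) (φ : X → α) (a : α) : Prop :=
  ∀ δ > (0 : ℝ), ∃ ε > (0 : ℝ), ∀ f : C(X, 𝕜), ‖f‖ ≤ 1 →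
    (∀ x, ε ≤ dist (φ x) a → f x = 0) → ‖θ f‖ < δ

def IsHeavyAt (θ : C(X, 𝕜) → 𝕜) (φ : X → α) (η : ℝ) (a : α) : Prop :=
  ∀ ε > (0 : ℝ), ∃ f : C(X, 𝕜), ‖f‖ ≤ 1 ∧ (∀ x, ε ≤ dist (φ x) a → f x = 0) ∧ η ≤ ‖θ f‖

theorem exists_isHeavyAt_of_not_isGoodAt {θ : C(X, 𝕜) → 𝕜} {φ : X → α} {a : α}
    (h : ¬ IsGoodAt θ φ a) : ∃ n : ℕ, IsHeavyAt θ φ (1 / (n + 1)) a := by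
  unfold IsGoodAt at h
  push Not at h
  obtain ⟨δ, hδ, hheavy⟩ := h
  obtain ⟨n, hn⟩ := exists_nat_one_div_lt hδ
  refine ⟨n, fun ε hε ↦ ?_⟩
  obtain ⟨f, hf, hvanish, hδf⟩ := hheavy ε hε
  exact ⟨f, hf, hvanish, hn.le.trans hδf⟩

theorem card_mul_le_opNorm_of_isHeavyAt (θ : C(X, 𝕜) →L⋆[𝕜] 𝕜) (φ : X → α) {η : ℝ}
    {T : Finset α} (hT : ∀ a ∈ T, IsHeavyAt θ φ η a) : T.card * η ≤ ‖θ‖ := by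
  obtain ⟨ε, hε, hdisj⟩ := (T : Set α).pairwiseDisjoint_nhds.exists_mem_filter_basis
    T.finite_toSet fun a ↦ Metric.nhds_basis_ball (x := a)
  have hch : ∀ a, ∃ f : C(X, 𝕜), a ∈ T →
      ‖f‖ ≤ 1 ∧ support f ⊆ φ ⁻¹' Metric.ball a (ε a) ∧ η ≤ ‖θ f‖ := by
    intro a
    by_cases ha : a ∈ T
    · obtain ⟨f, hf, hvanish, hη⟩ := hT a ha (ε a) (hε a)
      exact ⟨f, fun _ ↦ ⟨hf, fun x hx ↦ not_le.1 fun hfar ↦ hx (hvanish x hfar), hη⟩⟩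
    · exact ⟨0, fun h ↦ absurd h ha⟩
  choose f hf using hch
  calc T.card * η = ∑ a ∈ T, η := by rw [Finset.sum_const, nsmul_eq_mul]
    _ ≤ ∑ a ∈ T, ‖θ (f a)‖ := Finset.sum_le_sum fun a ha ↦ (hf a ha).2.2
    _ ≤ ‖θ‖ := sum_norm_le_opNorm_of_pairwiseDisjoint_support θ (fun a ha ↦ (hf a ha).1)
        fun a ha b hb hab ↦ ((hdisj ha hb hab).preimage φ).mono (hf a ha).2.1 (hf b hb).2.1

theorem finite_setOf_isHeavyAt (θ : C(X, 𝕜) →L⋆[𝕜] 𝕜) (φ : X → α) {η : ℝ} (hη : 0 < η) :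
    {a | IsHeavyAt θ φ η a}.Finite := by
  by_contra hinf
  obtain ⟨T, hT, hcard⟩ := Set.Infinite.exists_subset_card_eq hinf (⌊‖θ‖ / η⌋₊ + 1)
  have hle := card_mul_le_opNorm_of_isHeavyAt θ φ fun a ha ↦ hT ha
  rw [hcard, ← le_div_iff₀ hη] at hle
  exact (Nat.lt_floor_add_one (‖θ‖ / η)).not_ge (by exact_mod_cast hle)

theorem countable_setOf_not_isGoodAt (θ : C(X, 𝕜) →L⋆[𝕜] 𝕜) (φ : X → α) :
    {a | ¬ IsGoodAt θ φ a}.Countable :=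
  (Set.countable_iUnion fun n : ℕ ↦
      (finite_setOf_isHeavyAt θ φ n.one_div_pos_of_nat).countable).mono fun _ ha ↦ Set.mem_iUnion.2 (exists_isHeavyAt_of_not_isGoodAt ha)

end GoodPoints

theorem stmt11
    (M : ℝ)
    (θ : C(Sq M, ℂ) → ℂ)
    (hadd : ∀ f g, θ (f + g) = θ f + θ g)
    (hsmul : ∀ (c : ℂ) (f), θ (c • f) = (starRingEnd ℂ) c * θ f)
    (K : ℝ)
    (hbound : ∀ f, ‖θ f‖ ≤ K * ‖f‖) :
    {r ∈ Set.Icc (-M) M | ¬ GoodLine M θ true r}.Countable ∧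
    {r ∈ Set.Icc (-M) M | ¬ GoodLine M θ false r}.Countable := by
  let θL : C(Sq M, ℂ) →L⋆[ℂ] ℂ := LinearMap.mkContinuous ⟨⟨θ, hadd⟩, hsmul⟩ K hbound
  have hbad (b : Bool) : {r ∈ Set.Icc (-M) M | ¬ GoodLine M θ b r} ⊆
      {r | ¬ IsGoodAt θL (fun x : Sq M ↦ if b then (x : ℂ).re else (x : ℂ).im) r} :=
    -- definitional, as `dist r s = |r - s|` on `ℝ`
    fun _ hr ↦ hr.2
  exact ⟨(countable_setOf_not_isGoodAt θL _).mono (hbad true),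
    (countable_setOf_not_isGoodAt θL _).mono (hbad false)⟩
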